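/- Let n ≥ 2, N = n², and let E be the maximally entangled pure state on ℂⁿ⊗ℂⁿ (E = |ψ⟩⟨ψ| with ψ = (1/√n) Σ_{j=1}^{n} e_j⊗e_j). Then every separable state Q on ℂ^N satisfies ‖E − Q‖ ≥ √((n−1)/(n+1)) in Frobenius norm; moreover, the Werner state W(s) = (1−s)·I/N + s·E with s = 1/(1+n) satisfies ‖E − W(s)‖ = √((n−1)/(n+1)). -/

import Mathlib

/-!
Let `G = E - I/n²` be the traceless part of `E`. For a separable state `Q` we have
`⟨G, E - Q⟩ = 1 - ⟨E, Q⟩`, and the overlap of `E` with a pure product state `A ⊗ B` is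
`⟨A, Bᵀ⟩/n ≤ 1/n`, so `⟨G, E - Q⟩ ≥ (n-1)/n`. As `‖G‖ = √(1 - 1/n²)`, Cauchy–Schwarz gives
`‖E - Q‖ ≥ (n-1)/(n‖G‖) = √((n-1)/(n+1))`. The Werner state attains this bound because
`E - W(s) = (1 - s) G`.
-/

open Matrix BigOperators ComplexOrder

noncomputable section

/-- The Frobenius inner product `⟨A, B⟩ = Tr(Aᴴ B)`. -/
def frobInner {m : Type*} [Fintype m] (A B : Matrix m m ℂ) : ℂ :=
  (Aᴴ * B).trace

/-- The Frobenius norm associated to the Frobenius inner product. -/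
def frobNorm {m : Type*} [Fintype m] (A : Matrix m m ℂ) : ℝ :=
  Real.sqrt (frobInner A A).re

/-- A state (density matrix): a positive semidefinite (Hermitian) matrix of trace one. -/
def IsState {m : Type*} [Fintype m] (M : Matrix m m ℂ) : Prop :=
  M.PosSemidef ∧ M.trace = 1

/-- A pure state: a rank-one orthogonal projection, i.e. a Hermitian idempotent of trace one. -/
def IsPureState {m : Type*} [Fintype m] (M : Matrix m m ℂ) : Prop :=
  M.IsHermitian ∧ M * M = M ∧ M.trace = 1

/-- The Kronecker product of two matrices, on the product basis. -/
def prodMat2 {m₁ m₂ : Type*} (A : Matrix m₁ m₁ ℂ) (B : Matrix m₂ m₂ ℂ) :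
    Matrix (m₁ × m₂) (m₁ × m₂) ℂ :=
  fun j k => A j.1 k.1 * B j.2 k.2

/-- A pure product state on a bipartite system. -/
def IsPureProductState2 {m₁ m₂ : Type*} [Fintype m₁] [Fintype m₂]
    (M : Matrix (m₁ × m₂) (m₁ × m₂) ℂ) : Prop :=
  ∃ (A : Matrix m₁ m₁ ℂ) (B : Matrix m₂ m₂ ℂ),
    IsPureState A ∧ IsPureState B ∧ M = prodMat2 A B

/-- A separable state on a bipartite system: a finite convex combination of
pure product states. -/
def IsSeparable2 {m₁ m₂ : Type*} [Fintype m₁] [Fintype m₂]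
    (M : Matrix (m₁ × m₂) (m₁ × m₂) ℂ) : Prop :=
  ∃ (k : ℕ) (c : Fin k → ℝ) (P : Fin k → Matrix (m₁ × m₂) (m₁ × m₂) ℂ),
    (∀ i, 0 ≤ c i) ∧ (∑ i, c i) = 1 ∧ (∀ i, IsPureProductState2 (P i)) ∧
      M = ∑ i, (c i : ℂ) • P i

/-- The maximally entangled pure state on `ℂ^{N₁} ⊗ ℂ^{N₂}` (for `N₁ ≤ N₂`):
`E = |ψ⟩⟨ψ|` with `ψ = (1/√N₁) ∑ j, e j ⊗ e j`. -/
def maxEnt (N₁ N₂ : ℕ) : Matrix (Fin N₁ × Fin N₂) (Fin N₁ × Fin N₂) ℂ :=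
  fun x y =>
    (if (x.1 : ℕ) = (x.2 : ℕ) then (((Real.sqrt N₁ : ℝ) : ℂ))⁻¹ else 0) *
      star (if (y.1 : ℕ) = (y.2 : ℕ) then (((Real.sqrt N₁ : ℝ) : ℂ))⁻¹ else 0)

/-- The Werner state `W(s) = (1 - s) I/N + s E` on `ℂⁿ ⊗ ℂⁿ` (`N = n²`), where `E` is
the maximally entangled pure state `|ψ⟩⟨ψ|`, `ψ = (1/√n) ∑ j, e j ⊗ e j`. -/
def werner (n : ℕ) (s : ℝ) : Matrix (Fin n × Fin n) (Fin n × Fin n) ℂ :=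
  (((1 - s) / ((n : ℝ) ^ 2) : ℝ) : ℂ) • (1 : Matrix (Fin n × Fin n) (Fin n × Fin n) ℂ) +
    ((s : ℝ) : ℂ) • maxEnt n n

section Frobenius

variable {m : Type*} [Fintype m]

def frobVec (A : Matrix m m ℂ) : EuclideanSpace ℂ (m × m) :=
  WithLp.toLp 2 fun p => A p.1 p.2

theorem frobInner_apply (A B : Matrix m m ℂ) :
    frobInner A B = ∑ x, ∑ y, star (A x y) * B x y := by
  simp only [frobInner, trace, diag, mul_apply, conjTranspose_apply]
  rw [Finset.sum_comm]

theorem frobInner_eq_inner (A B : Matrix m m ℂ) :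
    frobInner A B = inner ℂ (frobVec A) (frobVec B) := by
  simp only [frobInner_apply, frobVec, PiLp.inner_apply, RCLike.inner_apply,
    Fintype.sum_prod_type]
  simp [mul_comm]

theorem frobNorm_eq_norm (A : Matrix m m ℂ) : frobNorm A = ‖frobVec A‖ := by
  rw [norm_eq_sqrt_re_inner (𝕜 := ℂ), frobNorm, frobInner_eq_inner]
  rfl

theorem re_frobInner_le_frobNorm_mul (A B : Matrix m m ℂ) :
    (frobInner A B).re ≤ frobNorm A * frobNorm B := by
  rw [frobInner_eq_inner, frobNorm_eq_norm, frobNorm_eq_norm]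
  exact re_inner_le_norm (𝕜 := ℂ) _ _

theorem frobNorm_ofReal_smul (r : ℝ) (A : Matrix m m ℂ) :
    frobNorm ((r : ℂ) • A) = |r| * frobNorm A := by
  rw [frobNorm_eq_norm, frobNorm_eq_norm, ← Real.norm_eq_abs, ← Complex.norm_real, ← norm_smul]
  rfl

theorem frobInner_sub_left (A B C : Matrix m m ℂ) :
    frobInner (A - B) C = frobInner A C - frobInner B C := by
  simp [frobInner, conjTranspose_sub, sub_mul]

theorem frobInner_sub_right (A B C : Matrix m m ℂ) :
    frobInner A (B - C) = frobInner A B - frobInner A C := by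
  simp [frobInner, mul_sub]

theorem frobInner_smul_left (a : ℂ) (A B : Matrix m m ℂ) :
    frobInner (a • A) B = star a * frobInner A B := by
  simp [frobInner, conjTranspose_smul, smul_mul, trace_smul]

theorem frobInner_smul_right (a : ℂ) (A B : Matrix m m ℂ) :
    frobInner A (a • B) = a * frobInner A B := by
  simp [frobInner, trace_smul]

theorem frobInner_sum_right {ι : Type*} (s : Finset ι) (A : Matrix m m ℂ)
    (B : ι → Matrix m m ℂ) : frobInner A (∑ i ∈ s, B i) = ∑ i ∈ s, frobInner A (B i) := by
  simp [frobInner, Finset.mul_sum, trace_sum]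

theorem frobInner_one_left [DecidableEq m] (B : Matrix m m ℂ) : frobInner 1 B = B.trace := by
  simp [frobInner]

theorem frobInner_conjTranspose_transpose (A B : Matrix m m ℂ) :
    frobInner Aᴴ Bᵀ = ∑ i, ∑ j, A i j * B i j := by
  rw [frobInner_apply, Finset.sum_comm]
  simp

end Frobenius

section PureState

variable {m : Type*} [Fintype m] {X Y : Matrix m m ℂ}

theorem IsPureState.frobNorm_eq_one (hX : IsPureState X) : frobNorm X = 1 := by
  obtain ⟨hherm, hidem, htr⟩ := hX
  simp [frobNorm, frobInner, hherm.eq, hidem, htr]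

theorem IsPureState.transpose (hX : IsPureState X) : IsPureState Xᵀ :=
  ⟨hX.1.transpose, by rw [← transpose_mul, hX.2.1], by rw [trace_transpose, hX.2.2]⟩

theorem IsPureState.re_frobInner_le_one (hX : IsPureState X) (hY : IsPureState Y) :
    (frobInner X Y).re ≤ 1 := by
  simpa [hX.frobNorm_eq_one, hY.frobNorm_eq_one] using re_frobInner_le_frobNorm_mul X Y

end PureState

section Separable

variable {m₁ m₂ : Type*} [Fintype m₁] [Fintype m₂]

theorem trace_prodMat2 (A : Matrix m₁ m₁ ℂ) (B : Matrix m₂ m₂ ℂ) :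
    (prodMat2 A B).trace = A.trace * B.trace := by
  simp [trace, prodMat2, Fintype.sum_prod_type, Finset.sum_mul_sum]

theorem IsPureProductState2.trace_eq_one {P : Matrix (m₁ × m₂) (m₁ × m₂) ℂ}
    (hP : IsPureProductState2 P) : P.trace = 1 := by
  obtain ⟨A, B, hA, hB, rfl⟩ := hP
  rw [trace_prodMat2, hA.2.2, hB.2.2, one_mul]

theorem IsSeparable2.trace_eq_one {Q : Matrix (m₁ × m₂) (m₁ × m₂) ℂ}
    (hQ : IsSeparable2 Q) : Q.trace = 1 := by
  obtain ⟨k, c, P, -, hc, hP, rfl⟩ := hQ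
  simp only [trace_sum, trace_smul, (hP _).trace_eq_one, smul_eq_mul, mul_one]
  exact_mod_cast hc

end Separable

section MaxEnt

variable {n : ℕ}

theorem maxEnt_apply (x y : Fin n × Fin n) :
    maxEnt n n x y = if x.1 = x.2 ∧ y.1 = y.2 then (n : ℂ)⁻¹ else 0 := by
  have hsq : ((Real.sqrt n : ℂ))⁻¹ * ((Real.sqrt n : ℂ))⁻¹ = (n : ℂ)⁻¹ := by
    rw [← mul_inv, ← Complex.ofReal_mul, Real.mul_self_sqrt n.cast_nonneg, Complex.ofReal_natCast]
  simp only [maxEnt, Fin.val_eq_val]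
  split_ifs <;> simp_all [Complex.conj_ofReal]

theorem frobInner_maxEnt_left (M : Matrix (Fin n × Fin n) (Fin n × Fin n) ℂ) :
    frobInner (maxEnt n n) M = (n : ℂ)⁻¹ * ∑ i, ∑ j, M (i, i) (j, j) := by
  simp only [frobInner_apply, maxEnt_apply, Fintype.sum_prod_type, apply_ite star,
    star_inv₀, star_natCast, star_zero, ite_mul, zero_mul]
  simp [ite_and, Finset.mul_sum]

theorem frobInner_maxEnt_prodMat2 (A B : Matrix (Fin n) (Fin n) ℂ) :
    frobInner (maxEnt n n) (prodMat2 A B) = (n : ℂ)⁻¹ * frobInner Aᴴ Bᵀ := by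
  rw [frobInner_maxEnt_left, frobInner_conjTranspose_transpose]
  rfl

theorem IsPureProductState2.re_frobInner_maxEnt_le {P : Matrix (Fin n × Fin n) (Fin n × Fin n) ℂ}
    (hP : IsPureProductState2 P) : (frobInner (maxEnt n n) P).re ≤ (n : ℝ)⁻¹ := by
  obtain ⟨A, B, hA, hB, rfl⟩ := hP
  have hAB : (frobInner A Bᵀ).re ≤ 1 := hA.re_frobInner_le_one hB.transpose
  rw [frobInner_maxEnt_prodMat2, hA.1.eq, ← Complex.ofReal_natCast, ← Complex.ofReal_inv,
    Complex.re_ofReal_mul]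
  exact mul_le_of_le_one_right (by positivity) hAB

theorem IsSeparable2.re_frobInner_maxEnt_le {Q : Matrix (Fin n × Fin n) (Fin n × Fin n) ℂ}
    (hQ : IsSeparable2 Q) : (frobInner (maxEnt n n) Q).re ≤ (n : ℝ)⁻¹ := by
  obtain ⟨k, c, P, hc, hsum, hP, rfl⟩ := hQ
  simp only [frobInner_sum_right, frobInner_smul_right, Complex.re_sum, Complex.re_ofReal_mul]
  calc ∑ i, c i * (frobInner (maxEnt n n) (P i)).re
      ≤ ∑ i, c i * (n : ℝ)⁻¹ :=
        Finset.sum_le_sum fun i _ => mul_le_mul_of_nonneg_left (hP i).re_frobInner_maxEnt_le (hc i)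
    _ = (n : ℝ)⁻¹ := by rw [← Finset.sum_mul, hsum, one_mul]

variable (hn : n ≠ 0)
include hn

theorem trace_maxEnt : (maxEnt n n).trace = 1 := by
  simp [trace, maxEnt_apply, Fintype.sum_prod_type, hn]

theorem frobInner_maxEnt_one : frobInner (maxEnt n n) 1 = 1 := by
  simp [frobInner_maxEnt_left, one_apply, hn]

theorem frobInner_maxEnt_self : frobInner (maxEnt n n) (maxEnt n n) = 1 := by
  simp [frobInner_maxEnt_left, maxEnt_apply, hn]

end MaxEnt

section Traceless

variable (n : ℕ)

def tracelessMaxEnt : Matrix (Fin n × Fin n) (Fin n × Fin n) ℂ :=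
  maxEnt n n - ((n : ℂ) ^ 2)⁻¹ • 1

theorem maxEnt_sub_werner (s : ℝ) :
    maxEnt n n - werner n s = ((1 - s : ℝ) : ℂ) • tracelessMaxEnt n := by
  simp only [werner, tracelessMaxEnt]
  push_cast
  module

variable {n} (hn : n ≠ 0)
include hn

theorem frobNorm_tracelessMaxEnt :
    frobNorm (tracelessMaxEnt n) = Real.sqrt (1 - ((n : ℝ) ^ 2)⁻¹) := by
  have h11 : frobInner (1 : Matrix (Fin n × Fin n) (Fin n × Fin n) ℂ) 1 = (n : ℂ) ^ 2 := by
    simp [frobInner_one_left, sq]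
  have hinner : frobInner (tracelessMaxEnt n) (tracelessMaxEnt n) = 1 - ((n : ℂ) ^ 2)⁻¹ := by
    simp only [tracelessMaxEnt, frobInner_sub_left, frobInner_sub_right, frobInner_smul_left,
      frobInner_smul_right, frobInner_maxEnt_self hn, frobInner_maxEnt_one hn,
      frobInner_one_left, trace_maxEnt hn, h11, star_inv₀, star_pow, star_natCast]
    field_simp
    ring
  rw [frobNorm, hinner, show (1 : ℂ) - ((n : ℂ) ^ 2)⁻¹ = ((1 - ((n : ℝ) ^ 2)⁻¹ : ℝ) : ℂ) by
    push_cast; rfl, Complex.ofReal_re]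

theorem frobInner_tracelessMaxEnt_maxEnt_sub {Q : Matrix (Fin n × Fin n) (Fin n × Fin n) ℂ}
    (hQ : Q.trace = 1) :
    frobInner (tracelessMaxEnt n) (maxEnt n n - Q) = 1 - frobInner (maxEnt n n) Q := by
  simp only [tracelessMaxEnt, frobInner_sub_left, frobInner_sub_right, frobInner_smul_left,
    frobInner_maxEnt_self hn, frobInner_one_left, trace_maxEnt hn, hQ]
  ring

end Traceless

theorem Real.sqrt_one_sub_inv_sq {x : ℝ} (hx : 0 < x) :
    Real.sqrt (1 - (x ^ 2)⁻¹) = (x + 1) / x * Real.sqrt ((x - 1) / (x + 1)) := by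
  rw [← Real.sqrt_sq (by positivity : 0 ≤ (x + 1) / x), ← Real.sqrt_mul (sq_nonneg _)]
  congr 1
  field_simp
  ring

/-- For `n ≥ 2`, `N = n²`, and `E` the maximally entangled pure state
on `ℂⁿ ⊗ ℂⁿ`: every separable state `Q` satisfies `‖E - Q‖ ≥ √((n-1)/(n+1))` in Frobenius
norm, and the Werner state `W(s)` with `s = 1/(1+n)` attains this:
`‖E - W(s)‖ = √((n-1)/(n+1))`. -/
theorem maxEnt_dist_separable (n : ℕ) (hn : 2 ≤ n) :
    (∀ Q : Matrix (Fin n × Fin n) (Fin n × Fin n) ℂ, IsSeparable2 Q →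
        Real.sqrt (((n : ℝ) - 1) / ((n : ℝ) + 1)) ≤ frobNorm (maxEnt n n - Q)) ∧
      frobNorm (maxEnt n n - werner n (1 / (1 + (n : ℝ)))) =
        Real.sqrt (((n : ℝ) - 1) / ((n : ℝ) + 1)) := by
  have hn0 : n ≠ 0 := by omega
  have hnR : (2 : ℝ) ≤ n := by exact_mod_cast hn
  set d := Real.sqrt (((n : ℝ) - 1) / ((n : ℝ) + 1))
  have hd : 0 < d := Real.sqrt_pos.mpr (by apply div_pos <;> linarith)
  have hdd : d * d = ((n : ℝ) - 1) / ((n : ℝ) + 1) :=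
    Real.mul_self_sqrt (by apply div_nonneg <;> linarith)
  have hG : frobNorm (tracelessMaxEnt n) = ((n : ℝ) + 1) / n * d := by
    rw [frobNorm_tracelessMaxEnt hn0, Real.sqrt_one_sub_inv_sq (by positivity)]
  refine ⟨fun Q hQ => ?_, ?_⟩
  · have hCS := re_frobInner_le_frobNorm_mul (tracelessMaxEnt n) (maxEnt n n - Q)
    rw [frobInner_tracelessMaxEnt_maxEnt_sub hn0 hQ.trace_eq_one, hG, Complex.sub_re,
      Complex.one_re] at hCS
    have hoverlap := hQ.re_frobInner_maxEnt_le
    have key : ((n : ℝ) + 1) / n * d * d ≤ ((n : ℝ) + 1) / n * d * frobNorm (maxEnt n n - Q) :=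
      calc ((n : ℝ) + 1) / n * d * d = 1 - (n : ℝ)⁻¹ := by
            rw [mul_assoc, hdd]; field_simp
        _ ≤ _ := by linarith
    exact le_of_mul_le_mul_left key (by positivity)
  · rw [maxEnt_sub_werner, frobNorm_ofReal_smul, hG, abs_of_pos (by rw [sub_pos, div_lt_one] <;> linarith)]
    field_simp
    ring
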